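/- Let Ω ⊂ ℝ^N be bounded open, p ≥ 1, and f : Ω × ℝ × ℝ^N → [0,∞) a Carathéodory function. Suppose f satisfies: for every m > 0 and every x in a set of full measure the condition (H^conv) holds taking ε = diam Ω, i.e. there is a constant C (depending on bounds) such that f(x,t,ξ) ≤ C·((f⁻_{B(x,diam Ω)}(t,·))**(ξ) + 1) whenever (f⁻_{B(x,diam Ω)}(t,·))**(ξ) + |ξ|^{max(p,N)} is bounded by a fixed constant. Then for every m > 0 there exists K_m > 0 such that for a.e. x ∈ Ω, max over {(t,ξ) : |(t,ξ)| ≤ m} of f(x,t,ξ) is at most K_m. (In short: the anti-jump condition implies f is essentially bounded on bounded sets of (t,ξ), uniformly in x.) -/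

import Mathlib

open MeasureTheory Set

/-- Greatest convex minorant of `φ : ℝ^N → ℝ`: the pointwise supremum of all convex
functions lying below `φ`. -/
noncomputable def gcm {N : ℕ} (φ : EuclideanSpace ℝ (Fin N) → ℝ)
    (ξ : EuclideanSpace ℝ (Fin N)) : ℝ :=
  ⨆ g : {g : EuclideanSpace ℝ (Fin N) → ℝ // ConvexOn ℝ univ g ∧ ∀ x, g x ≤ φ x},
    g.1 ξ

/-- `f⁻_{B(x,ε)}(t,ξ) = essinf_{y ∈ B(x,ε) ∩ Ω} f(y,t,ξ)`. -/
noncomputable def fminus {N : ℕ} (Ω : Set (EuclideanSpace ℝ (Fin N)))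
    (f : EuclideanSpace ℝ (Fin N) → ℝ → EuclideanSpace ℝ (Fin N) → ℝ)
    (x : EuclideanSpace ℝ (Fin N)) (ε t : ℝ) (ξ : EuclideanSpace ℝ (Fin N)) : ℝ :=
  essInf (fun y => f y t ξ) (volume.restrict (Metric.ball x ε ∩ Ω))

/-- The anti-jump condition `(H^conv)` with exponent `p`. -/
def Hconv {N : ℕ} (Ω : Set (EuclideanSpace ℝ (Fin N)))
    (f : EuclideanSpace ℝ (Fin N) → ℝ → EuclideanSpace ℝ (Fin N) → ℝ) (p : ℝ) : Prop :=
  ∀ k₁ k₂ : ℝ, 0 < k₁ → 0 < k₂ → ∃ C > (0:ℝ),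
    ∀ᵐ x ∂(volume.restrict Ω), ∀ t ∈ Ioo (-k₁) k₁, ∀ ξ : EuclideanSpace ℝ (Fin N),
      ∀ ε > (0:ℝ),
        gcm (fminus Ω f x ε t) ξ + ‖ξ‖ ^ (max p (N:ℝ)) ≤ k₂ / ε ^ (N:ℝ) →
          f x t ξ ≤ C * (gcm (fminus Ω f x ε t) ξ + 1)

/- The ball `B(x, ε)` may be taken so large that it contains `Ω` for a.e. `x`, with `ε`
independent of `x`; then `f⁻_{B(x,ε)}(t,ξ)` is the essential infimum of `f(·,t,ξ)` over all of
`Ω`. Continuity in `(t,ξ)` makes `f(y,·,·)` bounded on the compact set `|t|, |ξ| ≤ m` for a.e.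
`y`, hence bounded by one integer `n` on a set of positive measure, so all these essential infima
are at most `n`. Applying `(H^conv)` with `𝓀₂ = (n + (m+1)^{max(p,N)}) ε^N` gives
`f(x,t,ξ) ≤ C (n + 1)`. -/

/- Without convex minorants `gcm` is an empty supremum, which is `0` in `ℝ`. -/
theorem gcm_le_max_zero {N : ℕ} (φ : EuclideanSpace ℝ (Fin N) → ℝ)
    (ξ : EuclideanSpace ℝ (Fin N)) :
    gcm φ ξ ≤ max (φ ξ) 0 := by
  rcases isEmpty_or_nonempty
    {g : EuclideanSpace ℝ (Fin N) → ℝ // ConvexOn ℝ univ g ∧ ∀ x, g x ≤ φ x} with h | h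
  · rw [gcm, Real.iSup_of_isEmpty]
    exact le_max_right _ _
  · exact (ciSup_le fun g => g.2.2 ξ).trans (le_max_left _ _)

theorem fminus_eq_essInf {N : ℕ} {Ω : Set (EuclideanSpace ℝ (Fin N))}
    (f : EuclideanSpace ℝ (Fin N) → ℝ → EuclideanSpace ℝ (Fin N) → ℝ)
    {x : EuclideanSpace ℝ (Fin N)} {ε : ℝ} (hΩ : Ω ⊆ Metric.ball x ε) (t : ℝ) :
    fminus Ω f x ε t = fun ξ => essInf (fun y => f y t ξ) (volume.restrict Ω) := by
  funext ξ
  rw [fminus, inter_eq_right.mpr hΩ]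

theorem Bornology.IsBounded.ae_subset_ball {α : Type*} [PseudoMetricSpace α] [MeasurableSpace α]
    [OpensMeasurableSpace α] {s : Set α} (hs : Bornology.IsBounded s) (μ : Measure α) :
    ∃ ε > 0, ∀ᵐ x ∂μ.restrict s, s ⊆ Metric.ball x ε := by
  rcases s.eq_empty_or_nonempty with rfl | ⟨c, -⟩
  · exact ⟨1, one_pos, .of_forall fun _ => empty_subset _⟩
  obtain ⟨r, hr, hsr⟩ := hs.subset_ball_lt 0 c
  refine ⟨2 * r, by positivity, ?_⟩
  filter_upwards [ae_restrict_of_ae_restrict_of_subset hsr (ae_restrict_mem measurableSet_ball)]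
    with x hx y hy
  rw [Metric.mem_ball] at hx ⊢
  linarith [dist_triangle_right y x c, Metric.mem_ball.mp (hsr hy)]

namespace MeasureTheory

variable {α : Type*} [MeasurableSpace α] {μ : Measure α}

/- `0 ≤ c` is needed because of the junk value `sSup ∅ = 0` in `ℝ`. -/
theorem essInf_le_of_measure_setOf_le_ne_zero {f : α → ℝ} {c : ℝ} (hc : 0 ≤ c)
    (hμ : μ {y | f y ≤ c} ≠ 0) : essInf f μ ≤ c := by
  rw [essInf_eq_sSup]
  refine Real.sSup_le (fun a ha => ?_) hc
  by_contra! hca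
  exact hμ (measure_mono_null (fun y (hy : f y ≤ c) => hy.trans_lt hca) ha)

theorem exists_nat_forall_essInf_le {ι : Type*} [NeZero μ] {g : ι → α → ℝ} {S : Set ι}
    (hg : ∀ᵐ y ∂μ, BddAbove ((fun i => g i y) '' S)) :
    ∃ n : ℕ, ∀ i ∈ S, essInf (g i) μ ≤ n := by
  set E : ℕ → Set α := fun n => {y | BddAbove ((fun i => g i y) '' S) ∧
    sSup ((fun i => g i y) '' S) ≤ n}
  have hcover : ∀ᵐ y ∂μ, y ∈ ⋃ n, E n := hg.mono fun y hy =>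
    mem_iUnion.mpr ((exists_nat_ge _).imp fun n hn => ⟨hy, hn⟩)
  obtain ⟨n, hn⟩ := exists_measure_pos_of_not_measure_iUnion_null
    (frequently_ae_mem_iff.mp hcover.frequently)
  refine ⟨n, fun i hi => essInf_le_of_measure_setOf_le_ne_zero n.cast_nonneg ?_⟩
  refine fun h0 => hn.ne' (measure_mono_null (fun y hy => ?_) h0)
  exact (le_csSup hy.1 (mem_image_of_mem _ hi)).trans hy.2

end MeasureTheory

theorem stmt10_general {N : ℕ}
    (Ω : Set (EuclideanSpace ℝ (Fin N))) (hΩb : Bornology.IsBounded Ω)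
    (p : ℝ)
    (f : EuclideanSpace ℝ (Fin N) → ℝ → EuclideanSpace ℝ (Fin N) → ℝ)
    (hf_cont : ∀ᵐ x ∂(volume.restrict Ω),
      Continuous fun q : ℝ × EuclideanSpace ℝ (Fin N) => f x q.1 q.2)
    (hH : Hconv Ω f p) :
    ∀ m : ℝ, 0 < m → ∃ K > (0:ℝ), ∀ᵐ x ∂(volume.restrict Ω),
      ∀ (t : ℝ) (ξ : EuclideanSpace ℝ (Fin N)), |t| ≤ m → ‖ξ‖ ≤ m →
        f x t ξ ≤ K := by
  intro m hm
  rcases eq_zero_or_neZero (volume.restrict Ω) with hμ | hμ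
  · exact ⟨1, one_pos, by simp [hμ]⟩
  obtain ⟨n, hn⟩ := exists_nat_forall_essInf_le (S := Metric.closedBall 0 m)
    (g := fun (q : ℝ × EuclideanSpace ℝ (Fin N)) y => f y q.1 q.2)
    (hf_cont.mono fun y hy => (isCompact_closedBall 0 m).bddAbove_image hy.continuousOn)
  obtain ⟨ε, hε, hΩε⟩ := hΩb.ae_subset_ball volume
  set q := max p (N : ℝ)
  have hmq : 0 < (m + 1) ^ q := Real.rpow_pos_of_pos (by linarith) q
  obtain ⟨C, hC, hCx⟩ :=
    hH (m + 1) ((n + (m + 1) ^ q) * ε ^ (N : ℝ)) (by linarith) (by positivity)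
  refine ⟨C * (n + 1), by positivity, ?_⟩
  filter_upwards [hCx, hΩε] with x hx hΩx t ξ ht hξ
  have hgcm : gcm (fminus Ω f x ε t) ξ ≤ n := by
    rw [fminus_eq_essInf f hΩx]
    refine (gcm_le_max_zero _ ξ).trans (max_le (hn (t, ξ) ?_) n.cast_nonneg)
    rw [mem_closedBall_zero_iff, norm_prod_le_iff, Real.norm_eq_abs]
    exact ⟨ht, hξ⟩
  have hξq : ‖ξ‖ ^ q ≤ (m + 1) ^ q :=
    Real.rpow_le_rpow (norm_nonneg ξ) (by linarith) (le_max_of_le_right N.cast_nonneg)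
  have ht' : t ∈ Ioo (-(m + 1)) (m + 1) := by
    constructor <;> linarith [abs_le.mp ht]
  calc f x t ξ ≤ C * (gcm (fminus Ω f x ε t) ξ + 1) := by
        refine hx t ht' ξ ε hε ?_
        rw [mul_div_cancel_right₀ _ (Real.rpow_pos_of_pos hε _).ne']
        linarith
    _ ≤ C * (n + 1) := by gcongr

/-- If `f` is a non-negative Carathéodory function on a bounded open set
`Ω` satisfying the anti-jump condition `(H^conv)`, then `f` is essentially bounded on
bounded sets of `(t,ξ)`, uniformly in `x`. -/
theorem stmt10 {N : ℕ}
    (Ω : Set (EuclideanSpace ℝ (Fin N))) (hΩo : IsOpen Ω) (hΩb : Bornology.IsBounded Ω)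
    (p : ℝ) (hp : 1 ≤ p)
    (f : EuclideanSpace ℝ (Fin N) → ℝ → EuclideanSpace ℝ (Fin N) → ℝ)
    (hf_nonneg : ∀ x t ξ, 0 ≤ f x t ξ)
    (hf_meas : ∀ t ξ, Measurable fun x => f x t ξ)
    (hf_cont : ∀ᵐ x ∂(volume.restrict Ω),
      Continuous fun q : ℝ × EuclideanSpace ℝ (Fin N) => f x q.1 q.2)
    (hH : Hconv Ω f p) :
    ∀ m : ℝ, 0 < m → ∃ K > (0:ℝ), ∀ᵐ x ∂(volume.restrict Ω),
      ∀ (t : ℝ) (ξ : EuclideanSpace ℝ (Fin N)), |t| ≤ m → ‖ξ‖ ≤ m →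
        f x t ξ ≤ K :=
  stmt10_general Ω hΩb p f hf_cont hH
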